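/- Let M : [0,τ] → Sym_n(ℝ) be a differentiable function taking values in the n×n real symmetric matrices such that ∂_t M(t) ⪰ M(t)² (in the positive semidefinite order) for all t ∈ [0,τ]. Then for every unit vector w ∈ ℝⁿ, the function c_w : [0,τ] → ℝ defined by c_w(t) = exp(−∫₀ᵗ ⟨w, M(s)w⟩ ds) is concave. Consequently, for all t with 0 < t < τ and every unit vector w, −1/t ≤ ⟨w, M(t)w⟩ ≤ 1/(τ − t). -/

import Mathlib

/-!
Along a unit vector `w`, the scalar `f t = ⟨w, M t w⟩` satisfies the Riccati inequality
`f' ≥ f²`: indeed `⟨w, M' w⟩ ≥ ⟨w, M² w⟩ = |M w|² ≥ ⟨w, M w⟩²` by symmetry and Cauchy–Schwarz.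
For `c = exp (-∫ f)` this means `c'' = c (f² - f') ≤ 0`, so `c` is concave. Since `c > 0` and
`c 0 = 1`, comparing the tangent `c' t = -c t f t` with the chords to `0` and to `τ` gives
`-1/t ≤ f t ≤ 1/(τ - t)`.
-/

open Matrix Set Real MeasureTheory

section QuadraticForm

variable {m n : Type*} [Fintype m] [Fintype n]

lemma hasDerivAt_dotProduct_mulVec {M : ℝ → Matrix m n ℝ} {t : ℝ}
    (hM : ∀ i j, DifferentiableAt ℝ (fun s => M s i j) t) (v : m → ℝ) (w : n → ℝ) :
    HasDerivAt (fun s => v ⬝ᵥ M s *ᵥ w)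
      (v ⬝ᵥ (of fun i j => deriv (fun s => M s i j) t) *ᵥ w) t := by
  simp only [dotProduct, mulVec, of_apply, Finset.mul_sum]
  exact HasDerivAt.fun_sum fun i _ => HasDerivAt.fun_sum fun j _ =>
    ((hM i j).hasDerivAt.mul_const (w j)).const_mul (v i)

variable {R : Type*} [CommRing R] [LinearOrder R] [IsStrictOrderedRing R]

lemma sq_dotProduct_mulVec_le_of_isSymm {A : Matrix m m R} (hA : A.IsSymm) (w : m → R) :
    (w ⬝ᵥ A *ᵥ w) ^ 2 ≤ (∑ i, w i ^ 2) * (w ⬝ᵥ (A * A) *ᵥ w) := by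
  have hAA : w ⬝ᵥ (A * A) *ᵥ w = ∑ i, (A *ᵥ w) i ^ 2 := by
    rw [← mulVec_mulVec, dotProduct_mulVec, ← mulVec_transpose, hA.eq]
    simp only [dotProduct, sq]
  rw [hAA]
  exact Finset.sum_mul_sq_le_sq_mul_sq _ _ _

end QuadraticForm

lemma sq_dotProduct_mulVec_le_of_posSemidef_sub_mul_self {m : Type*} [Fintype m]
    {A D : Matrix m m ℝ} (hA : A.IsSymm) (hD : (D - A * A).PosSemidef) {w : m → ℝ}
    (hw : ∑ i, w i ^ 2 = 1) :
    (w ⬝ᵥ A *ᵥ w) ^ 2 ≤ w ⬝ᵥ D *ᵥ w := by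
  have hpos := hD.dotProduct_mulVec_nonneg w
  rw [star_trivial, sub_mulVec, dotProduct_sub, sub_nonneg] at hpos
  have hCS := sq_dotProduct_mulVec_le_of_isSymm hA w
  rw [hw, one_mul] at hCS
  exact hCS.trans hpos

section Riccati

variable {f f' : ℝ → ℝ} {a b : ℝ}

lemma hasDerivAt_exp_neg_integral (hf : ContinuousOn f (Icc a b)) {t : ℝ} (ht : t ∈ Ioo a b) :
    HasDerivAt (fun x => exp (-∫ s in a..x, f s)) (exp (-∫ s in a..t, f s) * -f t) t := by
  have hint : IntervalIntegrable f volume a t :=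
    (hf.mono (Icc_subset_Icc_right ht.2.le)).intervalIntegrable_of_Icc ht.1.le
  have hmeas := (hf.mono Ioo_subset_Icc_self).stronglyMeasurableAtFilter (μ := volume)
    isOpen_Ioo t ht
  exact (intervalIntegral.integral_hasDerivAt_right hint hmeas
    (hf.continuousAt (Icc_mem_nhds ht.1 ht.2))).neg.exp

lemma continuousOn_exp_neg_integral (hf : ContinuousOn f (Icc a b)) :
    ContinuousOn (fun x => exp (-∫ s in a..x, f s)) (Icc a b) := by
  intro x hx
  have hab := hx.1.trans hx.2
  have hprim := intervalIntegral.continuousOn_primitive_interval (μ := volume)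
    (a := a) (b := b) (by rw [uIcc_of_le hab]; exact hf.integrableOn_Icc)
  rw [uIcc_of_le hab] at hprim
  exact (hprim x hx).neg.rexp

lemma concaveOn_exp_neg_integral_of_sq_le_deriv (hf : ∀ t ∈ Icc a b, HasDerivAt f (f' t) t)
    (hsq : ∀ t ∈ Icc a b, f t ^ 2 ≤ f' t) :
    ConcaveOn ℝ (Icc a b) (fun x => exp (-∫ s in a..x, f s)) := by
  have hfc : ContinuousOn f (Icc a b) := fun t ht => (hf t ht).continuousAt.continuousWithinAt
  refine concaveOn_of_hasDerivWithinAt2_nonpos (convex_Icc a b)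
    (continuousOn_exp_neg_integral hfc)
    (f' := fun x => exp (-∫ s in a..x, f s) * -f x)
    (f'' := fun x => exp (-∫ s in a..x, f s) * -f x * -f x + exp (-∫ s in a..x, f s) * -f' x)
    ?_ ?_ ?_ <;> rw [interior_Icc] <;> intro t ht
  · exact (hasDerivAt_exp_neg_integral hfc ht).hasDerivWithinAt
  · exact ((hasDerivAt_exp_neg_integral hfc ht).mul
      (hf t (Ioo_subset_Icc_self ht)).neg).hasDerivWithinAt
  · nlinarith [mul_nonneg (exp_pos (-∫ s in a..t, f s)).le
      (sub_nonneg.2 (hsq t (Ioo_subset_Icc_self ht)))]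

lemma neg_one_div_sub_le_of_sq_le_deriv (hf : ∀ t ∈ Icc a b, HasDerivAt f (f' t) t)
    (hsq : ∀ t ∈ Icc a b, f t ^ 2 ≤ f' t) {t : ℝ} (hat : a < t) (htb : t < b) :
    -(1 / (t - a)) ≤ f t := by
  have hslope := (concaveOn_exp_neg_integral_of_sq_le_deriv hf hsq).le_slope_of_hasDerivAt
    (left_mem_Icc.2 (hat.trans htb).le) ⟨hat.le, htb.le⟩ hat
    (hasDerivAt_exp_neg_integral (fun x hx => (hf x hx).continuousAt.continuousWithinAt)
      ⟨hat, htb⟩)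
  rw [slope_def_field, intervalIntegral.integral_same, neg_zero, exp_zero,
    le_div_iff₀ (sub_pos.2 hat)] at hslope
  have hct := exp_pos (-∫ s in a..t, f s)
  rw [neg_le, le_div_iff₀ (sub_pos.2 hat)]
  nlinarith

lemma le_one_div_sub_of_sq_le_deriv (hf : ∀ t ∈ Icc a b, HasDerivAt f (f' t) t)
    (hsq : ∀ t ∈ Icc a b, f t ^ 2 ≤ f' t) {t : ℝ} (hat : a < t) (htb : t < b) :
    f t ≤ 1 / (b - t) := by
  have hslope := (concaveOn_exp_neg_integral_of_sq_le_deriv hf hsq).slope_le_of_hasDerivAt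
    ⟨hat.le, htb.le⟩ (right_mem_Icc.2 (hat.trans htb).le) htb
    (hasDerivAt_exp_neg_integral (fun x hx => (hf x hx).continuousAt.continuousWithinAt)
      ⟨hat, htb⟩)
  rw [slope_def_field, div_le_iff₀ (sub_pos.2 htb)] at hslope
  have hct := exp_pos (-∫ s in a..t, f s)
  have hcb := exp_pos (-∫ s in a..b, f s)
  rw [le_div_iff₀ (sub_pos.2 htb)]
  nlinarith

end Riccati

theorem matrix_diff_ineq_displacement_convexity_general
    {n : ℕ} (τ : ℝ)
    (M : ℝ → Matrix (Fin n) (Fin n) ℝ)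
    (hsymm : ∀ t ∈ Set.Icc (0:ℝ) τ, (M t).IsSymm)
    (hdiff : ∀ t ∈ Set.Icc (0:ℝ) τ, ∀ i j : Fin n,
      DifferentiableAt ℝ (fun s => M s i j) t)
    (hineq : ∀ t ∈ Set.Icc (0:ℝ) τ,
      ((Matrix.of fun i j => deriv (fun s => M s i j) t) - M t * M t).PosSemidef) :
    ∀ w : Fin n → ℝ, (∑ i, (w i)^2 = 1) →
      ConcaveOn ℝ (Set.Icc (0:ℝ) τ)
        (fun t => Real.exp (-(∫ s in (0:ℝ)..t, w ⬝ᵥ (M s).mulVec w))) ∧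
      (∀ t : ℝ, 0 < t → t < τ →
        -(1/t) ≤ w ⬝ᵥ (M t).mulVec w ∧ w ⬝ᵥ (M t).mulVec w ≤ 1/(τ - t)) := by
  intro w hw
  have hderiv : ∀ t ∈ Icc 0 τ, HasDerivAt (fun s => w ⬝ᵥ M s *ᵥ w)
      (w ⬝ᵥ (of fun i j => deriv (fun s => M s i j) t) *ᵥ w) t :=
    fun t ht => hasDerivAt_dotProduct_mulVec (hdiff t ht) w w
  have hsq : ∀ t ∈ Icc 0 τ, (w ⬝ᵥ M t *ᵥ w) ^ 2 ≤
      w ⬝ᵥ (of fun i j => deriv (fun s => M s i j) t) *ᵥ w :=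
    fun t ht => sq_dotProduct_mulVec_le_of_posSemidef_sub_mul_self (hsymm t ht) (hineq t ht) hw
  refine ⟨concaveOn_exp_neg_integral_of_sq_le_deriv hderiv hsq, fun t ht0 htτ => ⟨?_, ?_⟩⟩
  · simpa only [sub_zero] using neg_one_div_sub_le_of_sq_le_deriv hderiv hsq ht0 htτ
  · exact le_one_div_sub_of_sq_le_deriv hderiv hsq ht0 htτ

/-- Lemma: matrix displacement convexity from a matrix
differential inequality. If `M : [0,τ] → Sym_n(ℝ)` is differentiable with
`∂_t M(t) ⪰ M(t)²` on `[0,τ]`, then for every unit vector `w` the function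
`c_w(t) = exp(−∫₀ᵗ ⟨w, M(s)w⟩ ds)` is concave on `[0,τ]`; consequently, for
`0 < t < τ`, `−1/t ≤ ⟨w, M(t)w⟩ ≤ 1/(τ − t)`. -/
theorem matrix_diff_ineq_displacement_convexity
    {n : ℕ} (τ : ℝ) (hτ : 0 ≤ τ)
    (M : ℝ → Matrix (Fin n) (Fin n) ℝ)
    (hsymm : ∀ t ∈ Set.Icc (0:ℝ) τ, (M t).IsSymm)
    (hdiff : ∀ t ∈ Set.Icc (0:ℝ) τ, ∀ i j : Fin n,
      DifferentiableAt ℝ (fun s => M s i j) t)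
    (hineq : ∀ t ∈ Set.Icc (0:ℝ) τ,
      ((Matrix.of fun i j => deriv (fun s => M s i j) t) - M t * M t).PosSemidef) :
    ∀ w : Fin n → ℝ, (∑ i, (w i)^2 = 1) →
      ConcaveOn ℝ (Set.Icc (0:ℝ) τ)
        (fun t => Real.exp (-(∫ s in (0:ℝ)..t, w ⬝ᵥ (M s).mulVec w))) ∧
      (∀ t : ℝ, 0 < t → t < τ →
        -(1/t) ≤ w ⬝ᵥ (M t).mulVec w ∧ w ⬝ᵥ (M t).mulVec w ≤ 1/(τ - t)) :=
  matrix_diff_ineq_displacement_convexity_general τ M hsymm hdiff hineq
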